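/- Let V be a finite-dimensional real inner product space, Ω ⊆ V a nonempty proper open convex cone, and H ⊆ V a linear subspace with H ∩ closure(Ω) = {0} and orthogonal complement H^⊥. Then closure(H^⊥ ∩ (Ω + H)) = H^⊥ ∩ closure(Ω + H) = H^⊥ ∩ (closure(Ω) + H). -/

import Mathlib

open Set Filter
open scoped Pointwise RealInnerProductSpace Topology

/-- A subset `C` of a real vector space is a cone if `t • x ∈ C` for all `x ∈ C`, `t > 0`. -/
def IsCone {V : Type*} [AddCommGroup V] [Module ℝ V] (C : Set V) : Prop :=
  ∀ x ∈ C, ∀ t : ℝ, 0 < t → t • x ∈ C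

/-- The open dual cone of an open cone `Ω` with respect to the inner product. -/
def openDualCone {V : Type*} [NormedAddCommGroup V] [InnerProductSpace ℝ V] (Ω : Set V) :
    Set V :=
  {v | ∀ ω ∈ closure Ω, ω ≠ 0 → 0 < ⟪v, ω⟫}

/-!
An open convex cone absorbs its closure: `closure Ω + Ω ⊆ Ω`. Hence, for `q ∈ Hᗮ ∩ (Ω + H)` (the
`Hᗮ`-component of any point of `Ω`), every `x ∈ Hᗮ ∩ (closure Ω + H)` is the limit of the points
`x + t • q ∈ Hᗮ ∩ (Ω + H)` as `t → 0⁺`. This gives the second equality; the first follows because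
`closure Ω + H` is closed. That holds since `H` meets the closed cone `closure Ω` only in `0`:
compactness of the unit sphere gives `c ‖s‖ ≤ ‖s + h‖` on `closure Ω × H`, so the
`closure Ω`-components of points of `closure Ω + H` near a given point stay bounded.
-/

section

variable {G : Type*} [TopologicalSpace G] [Add G] [ContinuousAdd G]

theorem closure_add_eq_of_isClosed {A B : Set G} (h : IsClosed (closure A + B)) :
    closure (A + B) = closure A + B := by
  refine subset_antisymm (closure_minimal (add_subset_add_right subset_closure) h) ?_
  rintro _ ⟨a, ha, b, hb, rfl⟩
  exact map_mem_closure₂ continuous_add ha (subset_closure hb) fun a ha b hb => add_mem_add ha hb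

end

theorem isCone_closure {V : Type*} [AddCommGroup V] [Module ℝ V] [TopologicalSpace V]
    [ContinuousConstSMul ℝ V] {Ω : Set V} (hcone : IsCone Ω) : IsCone (closure Ω) :=
  fun _ hx t _ => map_mem_closure (continuous_const_smul t) hx fun y hy => hcone y hy t ‹_›

section TopologicalVectorSpace

variable {V : Type*} [AddCommGroup V] [Module ℝ V] [TopologicalSpace V] [IsTopologicalAddGroup V]
  [ContinuousSMul ℝ V] {Ω : Set V}

theorem IsCone.add_mem_of_mem_closure (hcone : IsCone Ω) (hopen : IsOpen Ω) (hconv : Convex ℝ Ω)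
    {w ω : V} (hw : w ∈ closure Ω) (hω : ω ∈ Ω) : w + ω ∈ Ω := by
  have hmid : (1 / 2 : ℝ) • w + (1 / 2 : ℝ) • ω ∈ Ω := by
    rw [← hopen.interior_eq] at hω ⊢
    exact hconv.combo_closure_interior_mem_interior hw hω (by norm_num) (by norm_num) (by norm_num)
  simpa [smul_add, smul_smul] using hcone _ hmid 2 two_pos

theorem IsCone.add_smul_mem_add_submodule (hcone : IsCone Ω) (hopen : IsOpen Ω)
    (hconv : Convex ℝ Ω) (H : Submodule ℝ V) {x q : V} (hx : x ∈ closure Ω + (H : Set V))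
    (hq : q ∈ Ω + (H : Set V)) {t : ℝ} (ht : 0 < t) : x + t • q ∈ Ω + (H : Set V) := by
  obtain ⟨w, hw, h, hh, rfl⟩ := hx
  obtain ⟨ω, hω, h', hh', rfl⟩ := hq
  refine ⟨w + t • ω, hcone.add_mem_of_mem_closure hopen hconv hw (hcone _ hω t ht),
    h + t • h', H.add_mem hh (H.smul_mem t hh'), ?_⟩
  simp only [smul_add]; abel

theorem IsCone.inter_closure_add_subset_closure_inter_add (hcone : IsCone Ω) (hopen : IsOpen Ω)
    (hconv : Convex ℝ Ω) (H K : Submodule ℝ V) {q : V} (hq : q ∈ (K : Set V) ∩ (Ω + (H : Set V))) :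
    (K : Set V) ∩ (closure Ω + (H : Set V)) ⊆ closure ((K : Set V) ∩ (Ω + (H : Set V))) := by
  rintro x ⟨hxK, hx⟩
  have hlim : Tendsto (fun t : ℝ => x + t • q) (𝓝[>] 0) (𝓝 x) := by
    have : Continuous (fun t : ℝ => x + t • q) := by fun_prop
    simpa using (this.tendsto 0).mono_left nhdsWithin_le_nhds
  refine mem_closure_of_tendsto hlim (eventually_nhdsWithin_of_forall fun t (ht : 0 < t) => ?_)
  exact ⟨K.add_mem hxK (K.smul_mem t hq.1),
    hcone.add_smul_mem_add_submodule hopen hconv H hx hq.2 ht⟩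

end TopologicalVectorSpace

section FiniteDimensional

variable {V : Type*} [NormedAddCommGroup V] [NormedSpace ℝ V] [FiniteDimensional ℝ V] {S : Set V}

theorem IsCone.exists_pos_mul_norm_le_norm_add (hS : IsCone S) (hclosed : IsClosed S)
    (H : Submodule ℝ V) (hSH : (H : Set V) ∩ S = {0}) :
    ∃ c > 0, ∀ s ∈ S, ∀ h ∈ H, c * ‖s‖ ≤ ‖s + h‖ := by
  have hdisj : Disjoint (S ∩ Metric.sphere 0 1) (H : Set V) := by
    refine Set.disjoint_left.2 fun s ⟨hs, hs1⟩ hsH => ?_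
    have : s = 0 := hSH.subset ⟨hsH, hs⟩
    simp [this] at hs1
  obtain ⟨r, hr, hsep⟩ := Metric.exists_pos_forall_lt_edist
    ((isCompact_sphere 0 1).inter_left hclosed) H.closed_of_finiteDimensional hdisj
  refine ⟨r, hr, fun s hs h hh => ?_⟩
  rcases eq_or_ne s 0 with rfl | hs0
  · simp
  have hpos : 0 < ‖s‖ := norm_pos_iff.2 hs0
  have hlt := hsep (‖s‖⁻¹ • s) ⟨hS _ hs _ (inv_pos.2 hpos), by simp [norm_smul, hpos.ne']⟩
    (-(‖s‖⁻¹ • h)) (H.neg_mem (H.smul_mem _ hh))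
  rw [edist_dist, ENNReal.coe_lt_ofReal, dist_eq_norm, sub_neg_eq_add, ← smul_add, norm_smul,
    norm_inv, norm_norm, inv_mul_eq_div, lt_div_iff₀ hpos] at hlt
  exact hlt.le

theorem IsCone.isClosed_add_submodule (hS : IsCone S) (hclosed : IsClosed S)
    (H : Submodule ℝ V) (hSH : (H : Set V) ∩ S = {0}) : IsClosed (S + (H : Set V)) := by
  obtain ⟨c, hc, hbound⟩ := hS.exists_pos_mul_norm_le_norm_add hclosed H hSH
  refine isClosed_of_closure_subset fun z hz => ?_
  have hloc : Metric.ball z 1 ∩ (S + (H : Set V))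
      ⊆ (S ∩ Metric.closedBall 0 ((‖z‖ + 1) / c)) + (H : Set V) := by
    rintro _ ⟨hball, s, hs, h, hh, rfl⟩
    refine ⟨s, ⟨hs, ?_⟩, h, hh, rfl⟩
    rw [mem_closedBall_zero_iff, le_div_iff₀ hc, mul_comm]
    have := norm_le_norm_add_norm_sub' (s + h) z
    rw [Metric.mem_ball, dist_eq_norm] at hball
    linarith [hbound s hs h hh]
  have hcl : IsClosed ((S ∩ Metric.closedBall 0 ((‖z‖ + 1) / c)) + (H : Set V)) :=
    H.closed_of_finiteDimensional.add_left_of_isCompact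
      ((isCompact_closedBall _ _).inter_left hclosed)
  have hz' : z ∈ closure (Metric.ball z 1 ∩ (S + (H : Set V))) :=
    Metric.isOpen_ball.inter_closure ⟨Metric.mem_ball_self one_pos, hz⟩
  exact add_subset_add_right inter_subset_left (hcl.closure_subset_iff.2 hloc hz')

end FiniteDimensional

theorem stmt_15_general {V : Type*} [NormedAddCommGroup V] [InnerProductSpace ℝ V]
    [FiniteDimensional ℝ V]
    (Ω : Set V) (hopen : IsOpen Ω) (hconv : Convex ℝ Ω)
    (hcone : IsCone Ω)
    (H : Submodule ℝ V) (hH : (H : Set V) ∩ closure Ω = {0}) :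
    closure ((Hᗮ : Set V) ∩ (Ω + (H : Set V)))
        = (Hᗮ : Set V) ∩ closure (Ω + (H : Set V)) ∧
      closure ((Hᗮ : Set V) ∩ (Ω + (H : Set V)))
        = (Hᗮ : Set V) ∩ (closure Ω + (H : Set V)) := by
  obtain ⟨ω, hω⟩ := closure_nonempty_iff.1 ⟨0, (hH.symm.subset rfl).2⟩
  have hq : ω - H.starProjection ω ∈ (Hᗮ : Set V) ∩ (Ω + (H : Set V)) :=
    ⟨H.sub_starProjection_mem_orthogonal ω, ω, hω, -H.starProjection ω,
      H.neg_mem (H.starProjection_apply_mem ω), (sub_eq_add_neg _ _).symm⟩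
  have hclosure : closure (Ω + (H : Set V)) = closure Ω + (H : Set V) :=
    closure_add_eq_of_isClosed <|
      (isCone_closure hcone).isClosed_add_submodule isClosed_closure H hH
  have hperp : closure ((Hᗮ : Set V) ∩ (Ω + (H : Set V)))
      = (Hᗮ : Set V) ∩ (closure Ω + (H : Set V)) := by
    refine subset_antisymm ?_ (hcone.inter_closure_add_subset_closure_inter_add hopen hconv H Hᗮ hq)
    refine (closure_inter_subset_inter_closure _ _).trans ?_
    rw [Hᗮ.closed_of_finiteDimensional.closure_eq, hclosure]
  exact ⟨hperp.trans (by rw [hclosure]), hperp⟩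

theorem stmt_15 {V : Type*} [NormedAddCommGroup V] [InnerProductSpace ℝ V]
    [FiniteDimensional ℝ V]
    (Ω : Set V) (hne : Ω.Nonempty) (hopen : IsOpen Ω) (hconv : Convex ℝ Ω)
    (hcone : IsCone Ω) (hproper : closure Ω ∩ -closure Ω = {0})
    (H : Submodule ℝ V) (hH : (H : Set V) ∩ closure Ω = {0}) :
    closure ((Hᗮ : Set V) ∩ (Ω + (H : Set V)))
        = (Hᗮ : Set V) ∩ closure (Ω + (H : Set V)) ∧
      closure ((Hᗮ : Set V) ∩ (Ω + (H : Set V)))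
        = (Hᗮ : Set V) ∩ (closure Ω + (H : Set V)) :=
  stmt_15_general Ω hopen hconv hcone H hH
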